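/- arXiv:1108.6324 — 4 statements merged into one kernel-verified Lean document; each statement's English description precedes it below -/
import Mathlib

section
/- Let s > 0 and define d_s : ℝ² × ℝ² → ℝ by d_s(x,y) = (1/(2s))·√((√(s²+|x|²) + √(s²+|y|²))² − |x+y|²) − 1. Then for all x, y ∈ ℝ², d_s(x,y) ≥ 0, d_s(x,y) = d_s(y,x), and d_s(x,y) = 0 if and only if x = y. -/
/-!
Write `τ x = √(s² + ‖x‖²)`. The radicand `(τ x + τ y)² - ‖x + y‖²` equals
`(2s)² + 2 (τ x τ y - (s² + ⟪x, y⟫))`, and `s² + ⟪x, y⟫ ≤ τ x τ y` is the Cauchy–Schwarz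
inequality for the lifts `(s, x)` and `(s, y)` in `ℝ × E`, whose norms are `τ x` and `τ y`.
Equality in Cauchy–Schwarz makes the lifts proportional; since their first coordinates are
the same nonzero `s`, this forces `x = y`.
-/

open Real RealInnerProductSpace

variable {E : Type*} [NormedAddCommGroup E]

lemma WithLp.norm_toLp_real_prod (s : ℝ) (x : E) :
    ‖WithLp.toLp 2 (s, x)‖ = √(s ^ 2 + ‖x‖ ^ 2) := by
  rw [WithLp.prod_norm_eq_of_L2, Real.norm_eq_abs, sq_abs]
  rfl

/-- The Lorentz norm of the sum of the lifts of `x` and `y` to the hyperboloid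
`τ = √(s² + ‖ξ‖²)`. -/
noncomputable def invariantMass (s : ℝ) (x y : E) : ℝ :=
  √((√(s ^ 2 + ‖x‖ ^ 2) + √(s ^ 2 + ‖y‖ ^ 2)) ^ 2 - ‖x + y‖ ^ 2)

lemma invariantMass_comm (s : ℝ) (x y : E) : invariantMass s x y = invariantMass s y x := by
  rw [invariantMass, invariantMass, add_comm x, add_comm (√(s ^ 2 + ‖x‖ ^ 2))]

variable [InnerProductSpace ℝ E]

lemma WithLp.inner_toLp_real_prod (s t : ℝ) (x y : E) :
    ⟪WithLp.toLp 2 (s, x), WithLp.toLp 2 (t, y)⟫ = s * t + ⟪x, y⟫ := by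
  simp [mul_comm]

lemma sq_add_inner_le_sqrt_mul_sqrt (s : ℝ) (x y : E) :
    s ^ 2 + ⟪x, y⟫ ≤ √(s ^ 2 + ‖x‖ ^ 2) * √(s ^ 2 + ‖y‖ ^ 2) := by
  simpa [sq, WithLp.inner_toLp_real_prod, WithLp.norm_toLp_real_prod] using
    real_inner_le_norm (WithLp.toLp 2 (s, x)) (WithLp.toLp 2 (s, y))

lemma eq_of_sqrt_mul_sqrt_eq_sq_add_inner {s : ℝ} (hs : s ≠ 0) {x y : E}
    (h : √(s ^ 2 + ‖x‖ ^ 2) * √(s ^ 2 + ‖y‖ ^ 2) = s ^ 2 + ⟪x, y⟫) : x = y := by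
  set u := WithLp.toLp 2 (s, x)
  set v := WithLp.toLp 2 (s, y)
  have hcs : ‖v‖ • u = ‖u‖ • v := by
    rw [← inner_eq_norm_mul_iff_real, WithLp.inner_toLp_real_prod,
      WithLp.norm_toLp_real_prod, WithLp.norm_toLp_real_prod, h, sq]
  have hnorm : ‖v‖ = ‖u‖ :=
    mul_right_cancel₀ hs (congrArg (fun w => (WithLp.ofLp w).1) hcs)
  have hu : ‖u‖ ≠ 0 := by
    rw [WithLp.norm_toLp_real_prod]; positivity
  have hsnd : ‖v‖ • x = ‖u‖ • y := congrArg (fun w => (WithLp.ofLp w).2) hcs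
  rw [hnorm] at hsnd
  exact smul_right_injective E hu hsnd

lemma sqrt_add_sqrt_sq_sub_norm_add_sq (s : ℝ) (x y : E) :
    (√(s ^ 2 + ‖x‖ ^ 2) + √(s ^ 2 + ‖y‖ ^ 2)) ^ 2 - ‖x + y‖ ^ 2 =
      (2 * s) ^ 2 + 2 * (√(s ^ 2 + ‖x‖ ^ 2) * √(s ^ 2 + ‖y‖ ^ 2) - (s ^ 2 + ⟪x, y⟫)) := by
  rw [add_sq, sq_sqrt (by positivity), sq_sqrt (by positivity), norm_add_sq_real]
  ring

lemma sq_two_mul_le_sqrt_add_sqrt_sq_sub_norm_add_sq (s : ℝ) (x y : E) :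
    (2 * s) ^ 2 ≤ (√(s ^ 2 + ‖x‖ ^ 2) + √(s ^ 2 + ‖y‖ ^ 2)) ^ 2 - ‖x + y‖ ^ 2 := by
  rw [sqrt_add_sqrt_sq_sub_norm_add_sq]
  linarith [sq_add_inner_le_sqrt_mul_sqrt s x y]

lemma two_mul_le_invariantMass (s : ℝ) (x y : E) : 2 * s ≤ invariantMass s x y :=
  le_sqrt_of_sq_le (sq_two_mul_le_sqrt_add_sqrt_sq_sub_norm_add_sq s x y)

lemma invariantMass_eq_two_mul_iff {s : ℝ} (hs : 0 < s) (x y : E) :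
    invariantMass s x y = 2 * s ↔ x = y := by
  have hle := sq_two_mul_le_sqrt_add_sqrt_sq_sub_norm_add_sq s x y
  rw [invariantMass, sqrt_eq_iff_eq_sq ((sq_nonneg _).trans hle) (by positivity),
    sqrt_add_sqrt_sq_sub_norm_add_sq]
  constructor
  · intro h
    exact eq_of_sqrt_mul_sqrt_eq_sq_add_inner hs.ne' (by linarith)
  · rintro rfl
    rw [real_inner_self_eq_norm_sq, mul_self_sqrt (by positivity)]
    ring

theorem stmt_7 (s : ℝ) (hs : 0 < s)
    (ds : EuclideanSpace ℝ (Fin 2) → EuclideanSpace ℝ (Fin 2) → ℝ)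
    (hds : ∀ x y, ds x y = (1 / (2 * s)) *
      Real.sqrt ((Real.sqrt (s ^ 2 + ‖x‖ ^ 2) + Real.sqrt (s ^ 2 + ‖y‖ ^ 2)) ^ 2
        - ‖x + y‖ ^ 2) - 1) :
    ∀ x y : EuclideanSpace ℝ (Fin 2),
      0 ≤ ds x y ∧ ds x y = ds y x ∧ (ds x y = 0 ↔ x = y) := by
  have hd : ∀ x y, ds x y = invariantMass s x y / (2 * s) - 1 := fun x y => by
    rw [hds, one_div_mul_eq_div, invariantMass]
  have h2s : 0 < 2 * s := by positivity
  intro x y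
  refine ⟨?_, ?_, ?_⟩
  · rw [hd, sub_nonneg, one_le_div₀ h2s]
    exact two_mul_le_invariantMass s x y
  · rw [hd, hd, invariantMass_comm]
  · rw [hd, sub_eq_zero, div_eq_one_iff_eq h2s.ne', invariantMass_eq_two_mul_iff hs]
end

section
/- Let s > 0 and R > 0. There exist constants 0 < C₁, C₂ < ∞ (depending on s and R) such that for all x, y ∈ ℝ² with |x| ≤ R and |y| ≤ R, we have C₁·|x−y|² ≤ d_s(x,y) ≤ C₂·|x−y|, where d_s(x,y) = (1/(2s))·√((√(s²+|x|²) + √(s²+|y|²))² − |x+y|²) − 1. -/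
/-!
Lift `x` to `X = (√(s² + ‖x‖²), x)` on the hyperboloid `T² - ‖x‖² = s²` of Minkowski space. The
radicand of `d_s` is `4s² + 2P`, where `P = lorentzGap s x y` measures the chord `X - Y`, so
`d_s = √(1 + P / (2s²)) - 1`, which is comparable to `P` while `P` stays bounded. The identity
`P · Q = s²‖x - y‖² + (‖x‖²‖y‖² - ⟪x, y⟫²)`, where `Q` is bounded above and below on the ball of
radius `R` and the Gram term lies between `0` and `‖x‖²‖x - y‖²`, makes `P` comparable to
`‖x - y‖²`. The linear upper bound then follows from `‖x - y‖ ≤ 2R`.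
-/

open RealInnerProductSpace

theorem Real.div_sqrt_one_add_add_one_le_sqrt_one_add_sub_one {q Q : ℝ} (hq : 0 ≤ q)
    (hqQ : q ≤ Q) : q / (√(1 + Q) + 1) ≤ √(1 + q) - 1 := by
  have hroot : √(1 + q) ^ 2 = 1 + q := Real.sq_sqrt (by linarith)
  have hmono : √(1 + q) ≤ √(1 + Q) := Real.sqrt_le_sqrt (by linarith)
  have hone : 1 ≤ √(1 + q) := Real.one_le_sqrt.2 (by linarith)
  rw [div_le_iff₀ (by positivity)]
  nlinarith

section Lift

variable {E : Type*} [SeminormedAddCommGroup E] (s : ℝ) (x y : E)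

noncomputable def hyperboloidLift : ℝ := √(s ^ 2 + ‖x‖ ^ 2)

theorem hyperboloidLift_sq : hyperboloidLift s x ^ 2 = s ^ 2 + ‖x‖ ^ 2 :=
  Real.sq_sqrt (by positivity)

theorem norm_le_hyperboloidLift : ‖x‖ ≤ hyperboloidLift s x :=
  Real.le_sqrt_of_sq_le (by nlinarith [sq_nonneg s])

theorem norm_mul_norm_le_hyperboloidLift_mul :
    ‖x‖ * ‖y‖ ≤ hyperboloidLift s x * hyperboloidLift s y :=
  mul_le_mul (norm_le_hyperboloidLift s x) (norm_le_hyperboloidLift s y) (norm_nonneg y)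
    (Real.sqrt_nonneg _)

theorem hyperboloidLift_mul_le {R : ℝ} (hx : ‖x‖ ≤ R) (hy : ‖y‖ ≤ R) :
    hyperboloidLift s x * hyperboloidLift s y ≤ s ^ 2 + R ^ 2 := by
  have hxR : hyperboloidLift s x ≤ √(s ^ 2 + R ^ 2) := Real.sqrt_le_sqrt (by gcongr)
  have hyR : hyperboloidLift s y ≤ √(s ^ 2 + R ^ 2) := Real.sqrt_le_sqrt (by gcongr)
  calc hyperboloidLift s x * hyperboloidLift s y ≤ √(s ^ 2 + R ^ 2) * √(s ^ 2 + R ^ 2) :=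
        mul_le_mul hxR hyR (Real.sqrt_nonneg _) (Real.sqrt_nonneg _)
    _ = s ^ 2 + R ^ 2 := Real.mul_self_sqrt (by positivity)

end Lift

section Inner

variable {E : Type*} [NormedAddCommGroup E] [InnerProductSpace ℝ E] {s R : ℝ} {x y : E}

theorem inner_sq_le_norm_sq_mul_norm_sq (x y : E) : ⟪x, y⟫ ^ 2 ≤ ‖x‖ ^ 2 * ‖y‖ ^ 2 := by
  rw [← mul_pow, ← sq_abs]
  exact pow_le_pow_left₀ (abs_nonneg _) (abs_real_inner_le_norm x y) 2

theorem abs_inner_le_sq_of_norm_le (hx : ‖x‖ ≤ R) (hy : ‖y‖ ≤ R) : |⟪x, y⟫| ≤ R ^ 2 :=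
  (abs_real_inner_le_norm x y).trans
    ((mul_le_mul hx hy (norm_nonneg y) ((norm_nonneg x).trans hx)).trans_eq (sq R).symm)

theorem norm_sq_mul_norm_sq_sub_inner_sq_le (x y : E) :
    ‖x‖ ^ 2 * ‖y‖ ^ 2 - ⟪x, y⟫ ^ 2 ≤ ‖x‖ ^ 2 * ‖x - y‖ ^ 2 := by
  rw [norm_sub_sq_real]
  nlinarith [sq_nonneg (‖x‖ ^ 2 - ⟪x, y⟫)]

variable (s x y) in
/-- With `X = (hyperboloidLift s x, x)` in `ℝ × E`, this is `-½ ⟨X - Y, X - Y⟩` for the Lorentzian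
form `T T' - ⟪x, x'⟫`. -/
noncomputable def lorentzGap : ℝ :=
  hyperboloidLift s x * hyperboloidLift s y - s ^ 2 - ⟪x, y⟫

variable (s x y) in
theorem lorentzGap_mul_eq :
    lorentzGap s x y * (hyperboloidLift s x * hyperboloidLift s y + s ^ 2 + ⟪x, y⟫) =
      s ^ 2 * ‖x - y‖ ^ 2 + (‖x‖ ^ 2 * ‖y‖ ^ 2 - ⟪x, y⟫ ^ 2) := by
  unfold lorentzGap
  linear_combination (hyperboloidLift s y ^ 2) * hyperboloidLift_sq s x +
    (s ^ 2 + ‖x‖ ^ 2) * hyperboloidLift_sq s y - s ^ 2 * norm_sub_sq_real x y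

variable (s x y) in
theorem lorentzGap_nonneg : 0 ≤ lorentzGap s x y := by
  have hprod : 0 ≤ hyperboloidLift s x * hyperboloidLift s y :=
    mul_nonneg (Real.sqrt_nonneg _) (Real.sqrt_nonneg _)
  have key : (s ^ 2 + ⟪x, y⟫) ^ 2 ≤ (hyperboloidLift s x * hyperboloidLift s y) ^ 2 := by
    have h := lorentzGap_mul_eq s x y
    unfold lorentzGap at h
    nlinarith [inner_sq_le_norm_sq_mul_norm_sq x y, sq_nonneg (s * ‖x - y‖)]
  unfold lorentzGap
  linarith [le_of_sq_le_sq key hprod]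

theorem lorentzGap_le (hx : ‖x‖ ≤ R) (hy : ‖y‖ ≤ R) : lorentzGap s x y ≤ 2 * R ^ 2 := by
  have hprod := hyperboloidLift_mul_le s x y hx hy
  have hinner := abs_le.1 (abs_inner_le_sq_of_norm_le hx hy)
  unfold lorentzGap
  linarith

theorem sq_mul_norm_sub_sq_le_lorentzGap (hx : ‖x‖ ≤ R) (hy : ‖y‖ ≤ R) :
    s ^ 2 * ‖x - y‖ ^ 2 ≤ 2 * (s ^ 2 + R ^ 2) * lorentzGap s x y := by
  have hprod := hyperboloidLift_mul_le s x y hx hy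
  have hinner := (abs_le.1 (abs_inner_le_sq_of_norm_le hx hy)).2
  nlinarith [lorentzGap_mul_eq s x y, inner_sq_le_norm_sq_mul_norm_sq x y,
    lorentzGap_nonneg s x y]

theorem sq_mul_lorentzGap_le (x y : E) :
    s ^ 2 * lorentzGap s x y ≤ (s ^ 2 + ‖x‖ ^ 2) * ‖x - y‖ ^ 2 := by
  have hinner := (abs_le.1 ((abs_real_inner_le_norm x y).trans
    (norm_mul_norm_le_hyperboloidLift_mul s x y))).1
  nlinarith [lorentzGap_mul_eq s x y, norm_sq_mul_norm_sq_sub_inner_sq_le x y,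
    lorentzGap_nonneg s x y]

variable (s x y) in
theorem hyperboloidLift_add_sq_sub_norm_add_sq :
    (hyperboloidLift s x + hyperboloidLift s y) ^ 2 - ‖x + y‖ ^ 2 =
      4 * s ^ 2 + 2 * lorentzGap s x y := by
  unfold lorentzGap
  linear_combination hyperboloidLift_sq s x + hyperboloidLift_sq s y - norm_add_sq_real x y

variable (s x y) in
noncomputable def hypDist : ℝ :=
  (1 / (2 * s)) *
    Real.sqrt ((Real.sqrt (s ^ 2 + ‖x‖ ^ 2) + Real.sqrt (s ^ 2 + ‖y‖ ^ 2)) ^ 2 - ‖x + y‖ ^ 2) - 1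

theorem hypDist_eq (hs : 0 < s) : hypDist s x y = √(1 + lorentzGap s x y / (2 * s ^ 2)) - 1 := by
  have hrad : 4 * s ^ 2 + 2 * lorentzGap s x y =
      (2 * s) ^ 2 * (1 + lorentzGap s x y / (2 * s ^ 2)) := by
    field_simp
    ring
  change 1 / (2 * s) * √((hyperboloidLift s x + hyperboloidLift s y) ^ 2 - ‖x + y‖ ^ 2) - 1 = _
  rw [hyperboloidLift_add_sq_sub_norm_add_sq, hrad, Real.sqrt_mul (by positivity),
    Real.sqrt_sq (by positivity)]
  field_simp

theorem hypDist_le (hs : 0 < s) (hx : ‖x‖ ≤ R) :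
    hypDist s x y ≤ (s ^ 2 + R ^ 2) / (4 * s ^ 4) * ‖x - y‖ ^ 2 := by
  have hq : 0 ≤ lorentzGap s x y / (2 * s ^ 2) :=
    div_nonneg (lorentzGap_nonneg s x y) (by positivity)
  have hgap : s ^ 2 * lorentzGap s x y ≤ (s ^ 2 + R ^ 2) * ‖x - y‖ ^ 2 :=
    (sq_mul_lorentzGap_le x y).trans (by gcongr)
  rw [hypDist_eq hs]
  calc √(1 + lorentzGap s x y / (2 * s ^ 2)) - 1 ≤ lorentzGap s x y / (2 * s ^ 2) / 2 := by
        linarith [Real.sqrt_one_add_le (x := lorentzGap s x y / (2 * s ^ 2)) (by linarith)]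
    _ ≤ (s ^ 2 + R ^ 2) / (4 * s ^ 4) * ‖x - y‖ ^ 2 := by
        rw [div_div, div_mul_eq_mul_div, div_le_div_iff₀ (by positivity) (by positivity)]
        nlinarith

theorem le_hypDist (hs : 0 < s) (hx : ‖x‖ ≤ R) (hy : ‖y‖ ≤ R) :
    ‖x - y‖ ^ 2 / (4 * (s ^ 2 + R ^ 2) * (√(1 + R ^ 2 / s ^ 2) + 1)) ≤ hypDist s x y := by
  have hq : lorentzGap s x y / (2 * s ^ 2) ≤ R ^ 2 / s ^ 2 := by
    rw [div_le_div_iff₀ (by positivity) (by positivity)]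
    nlinarith [lorentzGap_le (s := s) hx hy]
  have hdq : ‖x - y‖ ^ 2 / (4 * (s ^ 2 + R ^ 2)) ≤ lorentzGap s x y / (2 * s ^ 2) := by
    rw [div_le_div_iff₀ (by positivity) (by positivity)]
    nlinarith [sq_mul_norm_sub_sq_le_lorentzGap (s := s) hx hy]
  rw [hypDist_eq hs, ← div_div]
  calc ‖x - y‖ ^ 2 / (4 * (s ^ 2 + R ^ 2)) / (√(1 + R ^ 2 / s ^ 2) + 1)
      ≤ lorentzGap s x y / (2 * s ^ 2) / (√(1 + R ^ 2 / s ^ 2) + 1) := by gcongr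
    _ ≤ √(1 + lorentzGap s x y / (2 * s ^ 2)) - 1 :=
        Real.div_sqrt_one_add_add_one_le_sqrt_one_add_sub_one
          (div_nonneg (lorentzGap_nonneg s x y) (by positivity)) hq

end Inner

theorem stmt_9 (s R : ℝ) (hs : 0 < s) (hR : 0 < R) :
    ∃ C₁ C₂ : ℝ, 0 < C₁ ∧ 0 < C₂ ∧
      ∀ x y : EuclideanSpace ℝ (Fin 2), ‖x‖ ≤ R → ‖y‖ ≤ R →
        C₁ * ‖x - y‖ ^ 2 ≤ (1 / (2 * s)) *
            Real.sqrt ((Real.sqrt (s ^ 2 + ‖x‖ ^ 2) + Real.sqrt (s ^ 2 + ‖y‖ ^ 2)) ^ 2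
              - ‖x + y‖ ^ 2) - 1 ∧
          (1 / (2 * s)) *
            Real.sqrt ((Real.sqrt (s ^ 2 + ‖x‖ ^ 2) + Real.sqrt (s ^ 2 + ‖y‖ ^ 2)) ^ 2
              - ‖x + y‖ ^ 2) - 1 ≤ C₂ * ‖x - y‖ := by
  refine ⟨1 / (4 * (s ^ 2 + R ^ 2) * (√(1 + R ^ 2 / s ^ 2) + 1)),
    (s ^ 2 + R ^ 2) / (4 * s ^ 4) * (2 * R), by positivity, by positivity,
    fun x y hx hy => ⟨?_, ?_⟩⟩
  · rw [one_div_mul_eq_div]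
    exact le_hypDist hs hx hy
  · have hdist : ‖x - y‖ ^ 2 ≤ 2 * R * ‖x - y‖ := by
      rw [sq]
      exact mul_le_mul_of_nonneg_right (by linarith [norm_sub_le x y]) (norm_nonneg _)
    calc hypDist s x y ≤ (s ^ 2 + R ^ 2) / (4 * s ^ 4) * ‖x - y‖ ^ 2 := hypDist_le hs hx
      _ ≤ (s ^ 2 + R ^ 2) / (4 * s ^ 4) * (2 * R) * ‖x - y‖ := by
        rw [mul_assoc]
        exact mul_le_mul_of_nonneg_left hdist (by positivity)
end

section
/- Let Ei(x) = −∫_{−x}^∞ e^{−t}/t dt for x < 0 (the exponential integral). Then the function a ↦ −a·e^a·Ei(−a) on (0,∞) is strictly increasing, tends to 0 as a → 0⁺, and tends to 1 as a → ∞. -/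
open MeasureTheory Set Real Filter

noncomputable def Ei (x : ℝ) : ℝ := -∫ t in Set.Ioi (-x), Real.exp (-t) / t

lemma intOn_exp (c : ℝ) : IntegrableOn (fun t : ℝ => Real.exp (-t)) (Ioi c) := by
  simpa using exp_neg_integrableOn_Ioi c one_pos

lemma L1 {a : ℝ} (ha : 0 < a) : IntegrableOn (fun t => Real.exp (-t) / t) (Ioi a) := by
  refine Integrable.mono ((intOn_exp a).const_mul a⁻¹) ?_ ?_
  · exact ((measurable_exp.comp measurable_neg).div measurable_id).aestronglyMeasurable
  · filter_upwards [ae_restrict_mem measurableSet_Ioi] with t ht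
    rw [norm_div, Real.norm_eq_abs, Real.norm_eq_abs, Real.norm_eq_abs,
      abs_of_pos (exp_pos _), abs_of_pos (ha.trans ht), abs_of_pos (by positivity)]
    rw [div_le_iff₀ (ha.trans ht)]
    simp only [mem_Ioi] at ht
    rw [show a⁻¹ * Real.exp (-t) * t = (t/a) * Real.exp (-t) from by ring]
    nlinarith [exp_pos (-t), (one_le_div ha).2 ht.le]

lemma L2 {a : ℝ} (ha : 0 < a) :
    IntegrableOn (fun u => a * Real.exp (-u) / (a + u)) (Ioi 0) := by
  refine Integrable.mono (intOn_exp 0) ?_ ?_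
  · exact ((measurable_const.mul (measurable_exp.comp measurable_neg)).div
      (measurable_const.add measurable_id)).aestronglyMeasurable
  · filter_upwards [ae_restrict_mem measurableSet_Ioi] with u hu
    have h1 : (0:ℝ) < a + u := by simp at hu; linarith
    rw [Real.norm_eq_abs, Real.norm_eq_abs, abs_of_pos (exp_pos _),
      abs_of_pos (by positivity), div_le_iff₀ h1]
    simp only [mem_Ioi] at hu
    nlinarith [exp_pos (-u)]

lemma key {a : ℝ} (ha : 0 < a) :
    -a * Real.exp a * Ei (-a) = ∫ u in Ioi (0:ℝ), a * Real.exp (-u) / (a + u) := by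
  have hpre : (fun x : ℝ => x + a) ⁻¹' (Ioi a) = Ioi 0 := by
    ext x; simp [lt_iff_lt_of_le_iff_le]
  have htr := (measurePreserving_add_right (volume : Measure ℝ) a).setIntegral_preimage_emb
    (measurableEmbedding_addRight a) (fun t => Real.exp (-t) / t) (Ioi a)
  rw [hpre] at htr
  have : Ei (-a) = -∫ u in Ioi (0:ℝ), Real.exp (-(u + a)) / (u + a) := by
    rw [Ei, neg_neg, htr]
  rw [this, show -a * Real.exp a * -(∫ u in Ioi (0:ℝ), Real.exp (-(u + a)) / (u + a)) =
    (a * Real.exp a) * ∫ u in Ioi (0:ℝ), Real.exp (-(u + a)) / (u + a) from by ring,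
    ← integral_const_mul]
  congr 1 with u
  rw [Real.exp_neg (u + a), Real.exp_add, add_comm a u, Real.exp_neg]
  have h1 := Real.exp_ne_zero u
  have h2 := Real.exp_ne_zero a
  by_cases h3 : u + a = 0
  · simp [h3]
  · field_simp

theorem stmt_14 :
    StrictMonoOn (fun a : ℝ => -a * Real.exp a * Ei (-a)) (Set.Ioi 0) ∧
    Filter.Tendsto (fun a : ℝ => -a * Real.exp a * Ei (-a))
      (nhdsWithin 0 (Set.Ioi 0)) (nhds 0) ∧
    Filter.Tendsto (fun a : ℝ => -a * Real.exp a * Ei (-a))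
      Filter.atTop (nhds 1) := by
  refine ⟨?_, ?_, ?_⟩
  · -- strict mono
    intro a ha b hb hab
    simp only [mem_Ioi] at ha hb
    show -a * Real.exp a * Ei (-a) < -b * Real.exp b * Ei (-b)
    rw [key ha, key hb, ← sub_pos, ← integral_sub (L2 hb) (L2 ha)]
    set h : ℝ → ℝ := fun u => b * Real.exp (-u) / (b + u) - a * Real.exp (-u) / (a + u) with hh
    have hnn : ∀ u ∈ Ioi (0:ℝ), 0 < h u := by
      intro u hu
      simp only [mem_Ioi] at hu
      have h1 : (0:ℝ) < a + u := by linarith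
      have h2 : (0:ℝ) < b + u := by linarith
      have : a * Real.exp (-u) / (a + u) < b * Real.exp (-u) / (b + u) := by
        rw [div_lt_div_iff₀ h1 h2]
        have := exp_pos (-u)
        nlinarith [mul_pos (mul_pos (exp_pos (-u)) hu) (sub_pos.2 hab)]
      simp only [hh]; linarith
    refine (setIntegral_pos_iff_support_of_nonneg_ae ?_ ((L2 hb).sub (L2 ha))).2 ?_
    · filter_upwards [ae_restrict_mem measurableSet_Ioi] with u hu
      exact (hnn u hu).le
    · have hsub : Ioi (0:ℝ) ⊆ Function.support h ∩ Ioi 0 :=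
        fun u hu => ⟨ne_of_gt (hnn u hu), hu⟩
      calc (0:ENNReal) < volume (Ioi (0:ℝ)) := by simp
      _ ≤ _ := measure_mono hsub
  · -- tendsto 0
    have heq : ∀ᶠ a in nhdsWithin (0:ℝ) (Ioi 0),
        (∫ u in Ioi (0:ℝ), a * Real.exp (-u) / (a + u)) = -a * Real.exp a * Ei (-a) := by
      filter_upwards [self_mem_nhdsWithin] with a ha
      exact (key ha).symm
    refine Tendsto.congr' heq ?_
    have := MeasureTheory.tendsto_integral_filter_of_dominated_convergence
      (μ := (volume : Measure ℝ).restrict (Ioi 0))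
      (F := fun (a : ℝ) u => a * Real.exp (-u) / (a + u)) (f := fun _ => (0:ℝ))
      (bound := fun u => Real.exp (-u)) (l := nhdsWithin (0:ℝ) (Ioi 0))
      ?_ ?_ (intOn_exp 0) ?_
    · simpa using this
    · filter_upwards [self_mem_nhdsWithin] with a ha
      exact ((measurable_const.mul (measurable_exp.comp measurable_neg)).div
        (measurable_const.add measurable_id)).aestronglyMeasurable
    · filter_upwards [self_mem_nhdsWithin] with a ha
      filter_upwards [ae_restrict_mem measurableSet_Ioi] with u hu
      simp only [mem_Ioi] at ha hu
      have h1 : (0:ℝ) < a + u := by linarith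
      rw [Real.norm_eq_abs, abs_of_pos (by positivity), div_le_iff₀ h1]
      nlinarith [exp_pos (-u)]
    · filter_upwards [ae_restrict_mem measurableSet_Ioi] with u hu
      simp only [mem_Ioi] at hu
      have : Filter.Tendsto (fun a : ℝ => a * Real.exp (-u) / (a + u)) (nhds 0)
          (nhds (0 * Real.exp (-u) / (0 + u))) := by
        apply Filter.Tendsto.div
        · exact (tendsto_id.mul tendsto_const_nhds)
        · exact tendsto_id.add tendsto_const_nhds
        · simpa using ne_of_gt hu
      have h0 : (0:ℝ) * Real.exp (-u) / (0 + u) = 0 := by simp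
      rw [h0] at this
      exact this.mono_left nhdsWithin_le_nhds
  · -- tendsto 1 at top
    have heq : ∀ᶠ a in Filter.atTop,
        (∫ u in Ioi (0:ℝ), a * Real.exp (-u) / (a + u)) = -a * Real.exp a * Ei (-a) := by
      filter_upwards [Filter.eventually_gt_atTop 0] with a ha
      exact (key ha).symm
    refine Tendsto.congr' heq ?_
    have := MeasureTheory.tendsto_integral_filter_of_dominated_convergence
      (μ := (volume : Measure ℝ).restrict (Ioi 0))
      (F := fun (a : ℝ) u => a * Real.exp (-u) / (a + u))
      (f := fun u => Real.exp (-u))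
      (bound := fun u => Real.exp (-u)) (l := Filter.atTop)
      ?_ ?_ (intOn_exp 0) ?_
    · rw [integral_exp_neg_Ioi_zero] at this; exact this
    · filter_upwards [Filter.eventually_gt_atTop 0] with a ha
      exact ((measurable_const.mul (measurable_exp.comp measurable_neg)).div
        (measurable_const.add measurable_id)).aestronglyMeasurable
    · filter_upwards [Filter.eventually_gt_atTop 0] with a ha
      filter_upwards [ae_restrict_mem measurableSet_Ioi] with u hu
      simp only [mem_Ioi] at hu
      have h1 : (0:ℝ) < a + u := by linarith
      rw [Real.norm_eq_abs, abs_of_pos (by positivity), div_le_iff₀ h1]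
      nlinarith [exp_pos (-u)]
    · filter_upwards [ae_restrict_mem measurableSet_Ioi] with u hu
      simp only [mem_Ioi] at hu
      have h2 : Filter.Tendsto (fun a : ℝ => u * Real.exp (-u) / (a + u)) Filter.atTop (nhds 0) :=
        Filter.Tendsto.div_atTop tendsto_const_nhds
          (Filter.tendsto_atTop_add_const_right _ u Filter.tendsto_id)
      have h3 : Filter.Tendsto (fun a : ℝ => Real.exp (-u) - u * Real.exp (-u) / (a + u))
          Filter.atTop (nhds (Real.exp (-u) - 0)) := tendsto_const_nhds.sub h2
      rw [sub_zero] at h3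
      refine h3.congr' ?_
      filter_upwards [Filter.eventually_gt_atTop 0] with a ha
      have h1 : (a:ℝ) + u ≠ 0 := by positivity
      field_simp
      ring
end

section
/- Let s > 0, a > 0 and f_a(y) = exp(−a√(s²+|y|²)) for y ∈ ℝ³. Then ∫_{ℝ³} f_a(y)² dy/√(s²+|y|²) = (4π/a²)·∫_{as}^∞ e^{−2x}·√(x² − (as)²) dx, and consequently a²·∫_{ℝ³} f_a(y)² dy/√(s²+|y|²) → π as a → 0⁺. -/
/-!
Integrating in spherical coordinates turns the integral over `ℝ³` into
`4π ∫₀^∞ r² e^{-2a√(s²+r²)} / √(s²+r²) dr`, and the substitution `x = a√(s²+r²)` turns this into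
`(4π/a²) ∫_{as}^∞ e^{-2x} √(x² - (as)²) dx`. As `b = as → 0⁺`, dominated convergence (with
dominating function `x e^{-2x}`) sends `∫_b^∞ e^{-2x} √(x² - b²) dx` to `∫_0^∞ x e^{-2x} dx = 1/4`.
-/

open MeasureTheory Real Set Filter Topology

theorem integral_fun_norm_euclideanSpace_fin_three {F : Type*} [NormedAddCommGroup F]
    [NormedSpace ℝ F] (f : ℝ → F) :
    ∫ y : EuclideanSpace ℝ (Fin 3), f ‖y‖ = (4 * π) • ∫ r in Ioi (0 : ℝ), r ^ 2 • f r := by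
  rw [integral_fun_norm_addHaar, finrank_euclideanSpace_fin, measureReal_def,
    EuclideanSpace.volume_ball_fin_three, ← Nat.cast_smul_eq_nsmul ℝ, smul_smul]
  simp only [ENNReal.ofReal_one, one_pow, one_mul,
    ENNReal.toReal_ofReal (by positivity : 0 ≤ π * 4 / 3)]
  congr 1
  norm_num
  ring

theorem image_mul_sqrt_sq_add_sq_Ioi {a s : ℝ} (ha : 0 < a) (hs : 0 ≤ s) :
    (fun r => a * √(s ^ 2 + r ^ 2)) '' Ioi 0 = Ioi (a * s) := by
  ext x
  constructor
  · rintro ⟨r, hr, rfl⟩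
    have : s < √(s ^ 2 + r ^ 2) := (lt_sqrt hs).2 (by nlinarith [mem_Ioi.1 hr])
    exact mul_lt_mul_of_pos_left this ha
  · intro hx
    have hxa : s < x / a := (lt_div_iff₀ ha).2 (by linarith [mem_Ioi.1 hx])
    refine ⟨√((x / a) ^ 2 - s ^ 2), sqrt_pos.2 (by nlinarith), ?_⟩
    simp only [sq_sqrt (by nlinarith : (0 : ℝ) ≤ (x / a) ^ 2 - s ^ 2), add_sub_cancel,
      sqrt_sq (by linarith : (0 : ℝ) ≤ x / a)]
    field_simp

theorem integral_mul_sqrt_sq_sub_sq_eq {a s : ℝ} (ha : 0 < a) (hs : 0 ≤ s) (g : ℝ → ℝ) :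
    ∫ x in Ioi (a * s), g x * √(x ^ 2 - (a * s) ^ 2)
      = a ^ 2 * ∫ r in Ioi (0 : ℝ), r ^ 2 * (g (a * √(s ^ 2 + r ^ 2)) / √(s ^ 2 + r ^ 2)) := by
  have hpos : ∀ r ∈ Ioi (0 : ℝ), 0 < s ^ 2 + r ^ 2 := fun r hr => by
    have := mem_Ioi.1 hr; positivity
  have hderiv : ∀ r ∈ Ioi (0 : ℝ), HasDerivWithinAt (fun r => a * √(s ^ 2 + r ^ 2))
      (a * (r / √(s ^ 2 + r ^ 2))) (Ioi 0) r := fun r hr => by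
    have h := (((hasDerivAt_pow 2 r).const_add (s ^ 2)).sqrt (hpos r hr).ne').const_mul a
    refine (h.congr_deriv ?_).hasDerivWithinAt
    field_simp
    ring
  have hinj : InjOn (fun r => a * √(s ^ 2 + r ^ 2)) (Ioi 0) := fun r₁ h₁ r₂ h₂ he => by
    have := (sqrt_inj (hpos r₁ h₁).le (hpos r₂ h₂).le).1 (mul_left_cancel₀ ha.ne' he)
    nlinarith [mem_Ioi.1 h₁, mem_Ioi.1 h₂]
  rw [← image_mul_sqrt_sq_add_sq_Ioi ha hs,
    integral_image_eq_integral_abs_deriv_smul measurableSet_Ioi hderiv hinj,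
    ← integral_const_mul]
  refine setIntegral_congr_fun measurableSet_Ioi fun r hr => ?_
  have hr' : 0 < r := hr
  have hsqrt : 0 < √(s ^ 2 + r ^ 2) := sqrt_pos.2 (hpos r hr)
  have hsq : (a * √(s ^ 2 + r ^ 2)) ^ 2 - (a * s) ^ 2 = (a * r) ^ 2 := by
    rw [mul_pow, sq_sqrt (hpos r hr).le]; ring
  rw [smul_eq_mul, abs_of_pos (by positivity), hsq, sqrt_sq (by positivity)]
  field_simp

theorem integrableOn_exp_neg_mul_mul_Ioi {c : ℝ} (hc : 0 < c) :
    IntegrableOn (fun x => exp (-c * x) * x) (Ioi 0) := by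
  have := integrableOn_rpow_mul_exp_neg_mul_rpow (by norm_num : (-1 : ℝ) < 1) one_pos hc
  simp only [rpow_one] at this
  exact this.congr_fun (fun x _ => mul_comm _ _) measurableSet_Ioi

theorem integral_exp_neg_mul_mul_Ioi {c : ℝ} (hc : 0 < c) :
    ∫ x in Ioi (0 : ℝ), exp (-c * x) * x = 1 / c ^ 2 := by
  have := integral_rpow_mul_exp_neg_mul_Ioi two_pos hc
  norm_num [Gamma_two] at this
  rw [one_div, ← this]
  refine setIntegral_congr_fun measurableSet_Ioi fun x _ => ?_
  simp [mul_comm]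

/-- `√(x² - b²)` is `0` (Mathlib's `Real.sqrt` of a negative number) for `0 < x ≤ b`, so the
integral over `(b, ∞)` is one over the fixed domain `(0, ∞)`. -/
theorem setIntegral_exp_neg_mul_mul_sqrt_sq_sub_sq_Ioi {b : ℝ} (hb : 0 ≤ b) (c : ℝ) :
    ∫ x in Ioi b, exp (-c * x) * √(x ^ 2 - b ^ 2)
      = ∫ x in Ioi 0, exp (-c * x) * √(x ^ 2 - b ^ 2) := by
  refine (setIntegral_eq_of_subset_of_forall_sdiff_eq_zero measurableSet_Ioi
    (Ioi_subset_Ioi hb) fun x ⟨hx0, hxb⟩ => ?_).symm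
  simp only [mem_Ioi, not_lt] at hx0 hxb
  rw [sqrt_eq_zero_of_nonpos (by nlinarith), mul_zero]

theorem continuous_integral_exp_neg_mul_mul_sqrt_sq_sub_sq {c : ℝ} (hc : 0 < c) :
    Continuous fun b => ∫ x in Ioi (0 : ℝ), exp (-c * x) * √(x ^ 2 - b ^ 2) := by
  refine continuous_of_dominated (bound := fun x => exp (-c * x) * x)
    (fun b => by fun_prop) (fun b => ?_) (integrableOn_exp_neg_mul_mul_Ioi hc) ?_
  · refine (ae_restrict_iff' measurableSet_Ioi).2 (Eventually.of_forall fun x hx => ?_)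
    rw [norm_mul, norm_of_nonneg (exp_pos _).le, norm_of_nonneg (sqrt_nonneg _)]
    gcongr
    calc √(x ^ 2 - b ^ 2) ≤ √(x ^ 2) := sqrt_le_sqrt (by nlinarith)
      _ = x := sqrt_sq (le_of_lt hx)
  · exact Eventually.of_forall fun x => by fun_prop

theorem tendsto_setIntegral_exp_neg_mul_mul_sqrt_sq_sub_sq {c : ℝ} (hc : 0 < c) :
    Tendsto (fun b => ∫ x in Ioi b, exp (-c * x) * √(x ^ 2 - b ^ 2)) (𝓝[≥] 0)
      (𝓝 (1 / c ^ 2)) := by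
  have hvalue : ∫ x in Ioi (0 : ℝ), exp (-c * x) * √(x ^ 2 - 0 ^ 2) = 1 / c ^ 2 := by
    rw [← integral_exp_neg_mul_mul_Ioi hc]
    refine setIntegral_congr_fun measurableSet_Ioi fun x hx => ?_
    rw [zero_pow two_ne_zero, sub_zero, sqrt_sq (le_of_lt hx)]
  have hcont := (continuous_integral_exp_neg_mul_mul_sqrt_sq_sub_sq hc).continuousAt (x := 0)
  rw [ContinuousAt, hvalue] at hcont
  refine (hcont.mono_left nhdsWithin_le_nhds).congr' ?_
  filter_upwards [self_mem_nhdsWithin] with b hb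
  exact (setIntegral_exp_neg_mul_mul_sqrt_sq_sub_sq_Ioi hb c).symm

theorem stmt_19 (s : ℝ) (hs : 0 < s) :
    (∀ a : ℝ, 0 < a →
      ∫ y : EuclideanSpace ℝ (Fin 3),
          Real.exp (-a * Real.sqrt (s ^ 2 + ‖y‖ ^ 2)) ^ 2 / Real.sqrt (s ^ 2 + ‖y‖ ^ 2) =
        (4 * Real.pi / a ^ 2) *
          ∫ x in Set.Ioi (a * s), Real.exp (-2 * x) * Real.sqrt (x ^ 2 - (a * s) ^ 2)) ∧
    Filter.Tendsto (fun a : ℝ => a ^ 2 *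
        ∫ y : EuclideanSpace ℝ (Fin 3),
          Real.exp (-a * Real.sqrt (s ^ 2 + ‖y‖ ^ 2)) ^ 2 / Real.sqrt (s ^ 2 + ‖y‖ ^ 2))
      (nhdsWithin 0 (Set.Ioi 0)) (nhds Real.pi) := by
  have hformula : ∀ a : ℝ, 0 < a →
      ∫ y : EuclideanSpace ℝ (Fin 3), exp (-a * √(s ^ 2 + ‖y‖ ^ 2)) ^ 2 / √(s ^ 2 + ‖y‖ ^ 2) =
        (4 * π / a ^ 2) * ∫ x in Ioi (a * s), exp (-2 * x) * √(x ^ 2 - (a * s) ^ 2) := by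
    intro a ha
    have hexp : ∀ t, exp (-a * t) ^ 2 = exp (-2 * (a * t)) := fun t => by
      rw [← exp_nat_mul]; ring_nf
    rw [integral_fun_norm_euclideanSpace_fin_three
        (fun t => exp (-a * √(s ^ 2 + t ^ 2)) ^ 2 / √(s ^ 2 + t ^ 2)),
      integral_mul_sqrt_sq_sub_sq_eq ha hs.le]
    simp only [hexp, smul_eq_mul]
    field_simp
  refine ⟨hformula, ?_⟩
  have has : Tendsto (fun a => a * s) (𝓝[>] 0) (𝓝[≥] 0) :=
    tendsto_nhdsWithin_of_tendsto_nhds_of_eventually_within _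
      ((continuous_mul_const s).tendsto' 0 0 (zero_mul s) |>.mono_left nhdsWithin_le_nhds)
      (eventually_nhdsWithin_of_forall fun a ha => mem_Ici.2 (mul_pos ha hs).le)
  have hlim := ((tendsto_setIntegral_exp_neg_mul_mul_sqrt_sq_sub_sq two_pos).comp has).const_mul
    (4 * π)
  rw [show 4 * π * (1 / 2 ^ 2) = π by ring] at hlim
  refine hlim.congr' ?_
  filter_upwards [self_mem_nhdsWithin] with a ha
  have ha0 : a ≠ 0 := ne_of_gt ha
  rw [Function.comp_apply, hformula a ha]
  field_simp
end
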